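/- arXiv:1708.08493 — 3 statements merged into one kernel-verified Lean document; each statement's English description precedes it below -/
import Mathlib

section
/- Let G be a finite simple graph with |V(G)| > 1, let n ≥ 1, let G' = K̄_n ∨ G with m = n + |V(G)| vertices, let S ⊆ V(K̄_n) be nonempty, and let ℓ be a labeling of G' with peak set exactly S. Then the set of labels that ℓ assigns to the vertices of S is precisely the top |S| labels {m, m−1, …, m−|S|+1}. -/
open SimpleGraph

/-- A vertex `v` is a peak of the labeling `ℓ` of the graph `G` if `v` has degree at least 2
and the label of `v` is larger than the labels of all its neighbors. -/
def IsPeak {V : Type*} {n : ℕ} (G : SimpleGraph V) (ℓ : V ≃ Fin n) (v : V) : Prop :=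
  2 ≤ (G.neighborSet v).ncard ∧ ∀ w, G.Adj v w → ℓ w < ℓ v

/-- The peak set of a labeling `ℓ` of the graph `G`. -/
def peakSet {V : Type*} {n : ℕ} (G : SimpleGraph V) (ℓ : V ≃ Fin n) : Set V :=
  {v | IsPeak G ℓ v}

/-- `P(S;G)`: the set of labelings of `G` (bijections from `V(G)` to `{1,…,n}`,
here realized as equivalences `V ≃ Fin n` with `n = |V(G)|`) whose peak set is exactly `S`. -/
def peakLabelings {V : Type*} [Fintype V] (G : SimpleGraph V) (S : Set V) :
    Set (V ≃ Fin (Fintype.card V)) :=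
  {ℓ | peakSet G ℓ = S}

/-- The join of two simple graphs: keep all edges of both graphs and connect every vertex of
the first graph with every vertex of the second graph. -/
def graphJoin {V₁ V₂ : Type*} (G₁ : SimpleGraph V₁) (G₂ : SimpleGraph V₂) :
    SimpleGraph (V₁ ⊕ V₂) where
  Adj a b :=
    match a, b with
    | Sum.inl u, Sum.inl v => G₁.Adj u v
    | Sum.inr u, Sum.inr v => G₂.Adj u v
    | Sum.inl _, Sum.inr _ => True
    | Sum.inr _, Sum.inl _ => True
  symm := ⟨by rintro (a | a) (b | b) h <;> first | trivial | exact h.symm⟩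
  loopless := ⟨by
    rintro (a | a) h
    exacts [G₁.irrefl h, G₂.irrefl h]⟩

/-- The cycle graph on `ℤ/nℤ`: `i` is adjacent to `i ± 1 (mod n)`. -/
def cycleZMod (n : ℕ) : SimpleGraph (ZMod n) where
  Adj i j := i ≠ j ∧ (i - j = 1 ∨ j - i = 1)
  symm := ⟨fun _ _ h => ⟨h.1.symm, h.2.symm⟩⟩
  loopless := ⟨fun _ h => h.1 rfl⟩

/-- The path graph on `{0, 1, …, n-1}`: `k` is adjacent to `k + 1`. -/
def pathGraph' (n : ℕ) : SimpleGraph (Fin n) where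
  Adj a b := (a : ℕ) + 1 = (b : ℕ) ∨ (b : ℕ) + 1 = (a : ℕ)
  symm := ⟨fun _ _ h => h.symm⟩
  loopless := ⟨fun a h => by omega⟩

/-- for `|V(G)| > 1`, `n ≥ 1`, `G' = K̄_n ∨ G` with `m = n + |V(G)|` vertices,
nonempty `S ⊆ V(K̄_n)` and a labeling `ℓ` of `G'` with peak set exactly `S`, the set of labels
assigned to the vertices of `S` is the top `|S|` labels `{m − |S| + 1, …, m}`. -/
theorem null_join_peaks_get_top_labels {V : Type*} [Fintype V] (G : SimpleGraph V)
    (hV : 1 < Fintype.card V) (n : ℕ) (hn : 1 ≤ n)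
    (S : Set (Fin n)) (hS : S.Nonempty)
    (ℓ : (Fin n ⊕ V) ≃ Fin (Fintype.card (Fin n ⊕ V)))
    (hℓ : peakSet (graphJoin (⊥ : SimpleGraph (Fin n)) G) ℓ = Sum.inl '' S) :
    (fun v => (ℓ v : ℕ) + 1) '' (Sum.inl '' S) =
      Set.Icc (n + Fintype.card V - S.ncard + 1) (n + Fintype.card V) := by
  classical
  have hm : Fintype.card (Fin n ⊕ V) = n + Fintype.card V := by simp
  have hk1 : 1 ≤ S.ncard := (Set.ncard_pos S.toFinite).mpr hS
  have hkn : S.ncard ≤ n := by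
    calc S.ncard ≤ (Set.univ : Set (Fin n)).ncard := Set.ncard_le_ncard (Set.subset_univ S)
    _ = n := by rw [Set.ncard_univ, Nat.card_eq_fintype_card, Fintype.card_fin]
  -- peaks beat V-side vertices
  have hpeak : ∀ s ∈ S, ∀ v : V, ℓ (Sum.inr v) < ℓ (Sum.inl s) := by
    intro s hs v
    have hp : IsPeak (graphJoin (⊥ : SimpleGraph (Fin n)) G) ℓ (Sum.inl s) := by
      have : Sum.inl s ∈ peakSet (graphJoin (⊥ : SimpleGraph (Fin n)) G) ℓ := by
        rw [hℓ]; exact ⟨s, hs, rfl⟩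
      exact this
    exact hp.2 (Sum.inr v) trivial
  -- everything outside inl '' S is below every peak
  have hlt : ∀ x, x ∉ Sum.inl '' S → ∀ s ∈ S, (ℓ x : ℕ) < (ℓ (Sum.inl s) : ℕ) := by
    intro x hx s hs
    cases x with
    | inr v => exact hpeak s hs v
    | inl t =>
      have hnp : ¬ IsPeak (graphJoin (⊥ : SimpleGraph (Fin n)) G) ℓ (Sum.inl t) := by
        intro h
        have : Sum.inl t ∈ peakSet (graphJoin (⊥ : SimpleGraph (Fin n)) G) ℓ := h
        rw [hℓ] at this
        exact hx this
      have hdeg : 2 ≤ ((graphJoin (⊥ : SimpleGraph (Fin n)) G).neighborSet (Sum.inl t)).ncard := by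
        have hns : ((graphJoin (⊥ : SimpleGraph (Fin n)) G).neighborSet (Sum.inl t)) =
            Set.range Sum.inr := by
          ext (u | v) <;> simp [neighborSet, graphJoin]
        rw [hns, ← Set.image_univ, Set.ncard_image_of_injective _ Sum.inr_injective,
          Set.ncard_univ, Nat.card_eq_fintype_card]
        omega
      rw [IsPeak, not_and] at hnp
      have hnp' := hnp hdeg
      push_neg at hnp'
      obtain ⟨w, hw, hwl⟩ := hnp'
      obtain ⟨v, rfl⟩ : ∃ v, w = Sum.inr v := by
        cases w with
        | inl u => exact absurd hw (by simp [graphJoin])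
        | inr v => exact ⟨v, rfl⟩
      have h1 : ℓ (Sum.inl t) < ℓ (Sum.inr v) := by
        rcases lt_or_eq_of_le hwl with h | h
        · exact h
        · exact absurd (ℓ.injective h) (by simp)
      exact lt_trans h1 (hpeak s hs v)
  -- the finset of peak labels
  set Af : Finset (Fin (Fintype.card (Fin n ⊕ V))) := Set.toFinset (ℓ '' (Sum.inl '' S)) with hAf
  have hAfmem : ∀ a, a ∈ Af ↔ ℓ.symm a ∈ Sum.inl '' S := by
    intro a
    rw [hAf, Set.mem_toFinset]
    constructor
    · rintro ⟨x, hx, rfl⟩; simpa using hx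
    · intro h; exact ⟨ℓ.symm a, h, by simp⟩
  have hAfcard : Af.card = S.ncard := by
    rw [hAf, ← Set.ncard_eq_toFinset_card',
      Set.ncard_image_of_injective _ ℓ.injective,
      Set.ncard_image_of_injective _ Sum.inl_injective]
  have hcm : Fintype.card (Fin n ⊕ V) - S.ncard < Fintype.card (Fin n ⊕ V) := by omega
  set c : Fin (Fintype.card (Fin n ⊕ V)) := ⟨Fintype.card (Fin n ⊕ V) - S.ncard, hcm⟩ with hc
  have hcv : (c : ℕ) = Fintype.card (Fin n ⊕ V) - S.ncard := rfl
  have hsub : Af ⊆ Finset.Ici c := by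
    intro a ha
    have hcompl : Afᶜ ⊆ Finset.Iio a := by
      intro b hb
      rw [Finset.mem_compl] at hb
      rw [Finset.mem_Iio]
      have hb' : ℓ.symm b ∉ Sum.inl '' S := fun h => hb ((hAfmem b).mpr h)
      obtain ⟨x, hx, hxa⟩ : ∃ x ∈ Sum.inl '' S, ℓ x = a := by
        have := (hAfmem a).mp ha
        exact ⟨ℓ.symm a, this, by simp⟩
      obtain ⟨s, hs, rfl⟩ := hx
      have h2 := hlt (ℓ.symm b) hb' s hs
      rw [Equiv.apply_symm_apply, hxa] at h2
      exact h2
    have h1 : Afᶜ.card = Fintype.card (Fin n ⊕ V) - S.ncard := by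
      rw [Finset.card_compl, hAfcard, Fintype.card_fin]
    have h2 : (Finset.Iio a).card = (a : ℕ) := Fin.card_Iio a
    have h3 := Finset.card_le_card hcompl
    rw [h1, h2] at h3
    rw [Finset.mem_Ici]
    exact h3
  have hAfeq : Af = Finset.Ici c := by
    apply Finset.eq_of_subset_of_card_le hsub
    rw [Fin.card_Ici, hAfcard, hcv]
    omega
  -- conclude
  ext j
  simp only [Set.mem_image, Set.mem_Icc]
  constructor
  · rintro ⟨x, hx, rfl⟩
    have hx' : ℓ x ∈ Af := by rw [hAfmem]; simpa using hx
    rw [hAfeq, Finset.mem_Ici] at hx'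
    have h4 : (c : ℕ) ≤ (ℓ x : ℕ) := hx'
    have h5 := (ℓ x).isLt
    omega
  · rintro ⟨h1, h2⟩
    have hjm : j - 1 < Fintype.card (Fin n ⊕ V) := by omega
    have haA : (⟨j - 1, hjm⟩ : Fin (Fintype.card (Fin n ⊕ V))) ∈ Af := by
      rw [hAfeq, Finset.mem_Ici]
      show (c : ℕ) ≤ j - 1
      omega
    rw [hAfmem] at haA
    refine ⟨ℓ.symm ⟨j - 1, hjm⟩, haA, ?_⟩
    simp only [Equiv.apply_symm_apply]
    omega
end

section
/- Let 1 ≤ k < n with n ≥ 3, and let k𝒮_n = K_k ∨ K̄_{n−k} be the ternary star graph on n vertices. For any S = {v} with v ∈ V(K_k), |P(S; k𝒮_n)| = (n−1)!. -/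
open SimpleGraph

lemma card_equiv_fix {α : Type*} [Fintype α] [DecidableEq α] (a : α) (m : ℕ)
    (hα : Fintype.card α = m + 1) :
    Nat.card {ℓ : α ≃ Fin (m + 1) // ℓ a = Fin.last m} = Nat.factorial m := by
  classical
  set γ := {w : α // w ≠ a}
  let q : Option γ ≃ α := Equiv.optionSubtypeNe a
  have hq : q none = a := rfl
  let E1 : (α ≃ Fin (m + 1)) ≃ (Option γ ≃ Fin (m + 1)) :=
    Equiv.equivCongr q.symm (Equiv.refl _)
  have hE1 : ∀ ℓ : α ≃ Fin (m+1), (E1 ℓ) none = ℓ a := fun ℓ => rfl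
  have E2 : {ℓ : α ≃ Fin (m+1) // ℓ a = Fin.last m} ≃
      {e : Option γ ≃ Fin (m+1) // e none = Fin.last m} :=
    Equiv.subtypeEquiv E1 (fun ℓ => by rw [hE1])
  have E3 := Equiv.optionSubtype (α := γ) (Fin.last m)
  have hγ : Fintype.card γ = m := by
    have := Fintype.card_subtype_compl (fun w : α => w = a)
    simp only [Fintype.card_subtype_eq] at this
    simp only [γ]
    convert this using 2
    omega
  have hδ : Fintype.card {y : Fin (m+1) // y ≠ Fin.last m} = m := by
    have := Fintype.card_subtype_compl (fun y : Fin (m+1) => y = Fin.last m)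
    simp only [Fintype.card_subtype_eq] at this
    convert this using 2
    simp
  have e4 : γ ≃ {y : Fin (m+1) // y ≠ Fin.last m} :=
    Fintype.equivOfCardEq (by rw [hγ, hδ])
  rw [Nat.card_congr (E2.trans E3), Nat.card_eq_fintype_card, Fintype.card_equiv e4, hγ]

lemma card_equiv_max {α : Type*} [Fintype α] [DecidableEq α] (a : α) (m : ℕ)
    (hα : Fintype.card α = m + 1) :
    Nat.card {ℓ : α ≃ Fin (m + 1) // ∀ w, w ≠ a → ℓ w < ℓ a} = Nat.factorial m := by
  rw [← card_equiv_fix a m hα]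
  apply Nat.card_congr (Equiv.subtypeEquivRight ?_)
  intro ℓ
  constructor
  · intro h
    obtain ⟨w, hw⟩ := ℓ.surjective (Fin.last m)
    by_contra hne
    have hwa : w ≠ a := by rintro rfl; rw [hw] at hne; exact hne rfl
    exact absurd (hw ▸ Fin.le_last (ℓ a)) (not_le.mpr (h w hwa))
  · intro h w hw
    have hne : ℓ w ≠ ℓ a := fun he => hw (ℓ.injective he)
    rw [h] at hne ⊢
    exact lt_of_le_of_ne (Fin.le_last _) hne

/-- for the ternary star graph `k𝒮_n = K_k ∨ K̄_{n−k}` with `1 ≤ k < n`,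
`n ≥ 3`, and `S = {v}` with `v ∈ V(K_k)`, `|P(S; k𝒮_n)| = (n−1)!`. -/
theorem ternary_star_complete_side_count (n k : ℕ) (hk : 1 ≤ k) (hkn : k < n)
    (hn : 3 ≤ n) (v : Fin k) :
    (peakLabelings
        (graphJoin (⊤ : SimpleGraph (Fin k)) (⊥ : SimpleGraph (Fin (n - k))))
        {Sum.inl v}).ncard =
      Nat.factorial (n - 1) := by
  classical
  set V := Fin k ⊕ Fin (n - k) with hV
  set G := graphJoin (⊤ : SimpleGraph (Fin k)) (⊥ : SimpleGraph (Fin (n - k))) with hG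
  have hcard : Fintype.card V = n := by
    simp [hV]
    omega
  have hadj : ∀ w : V, G.Adj (Sum.inl v) w ↔ w ≠ Sum.inl v := by
    rintro (u | u)
    · constructor
      · intro h hne
        exact G.irrefl (hne ▸ h)
      · intro hne
        show (⊤ : SimpleGraph (Fin k)).Adj v u
        simp only [top_adj]
        intro he
        exact hne (by rw [he])
    · constructor
      · intro _ h
        exact nomatch h
      · intro _
        exact trivial
  have hset : peakLabelings G {Sum.inl v} =
      {ℓ : V ≃ Fin (Fintype.card V) | ∀ w, w ≠ Sum.inl v → ℓ w < ℓ (Sum.inl v)} := by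
    ext ℓ
    simp only [peakLabelings, Set.mem_setOf_eq, Set.eq_singleton_iff_unique_mem]
    constructor
    · rintro ⟨⟨_, hlt⟩, _⟩ w hw
      exact hlt w ((hadj w).mpr hw)
    · intro h
      refine ⟨⟨?_, fun w hw => h w ((hadj w).mp hw)⟩, fun u hu => ?_⟩
      · have hns : G.neighborSet (Sum.inl v) = {Sum.inl v}ᶜ := by
          ext w
          simp [SimpleGraph.neighborSet, hadj w]
        rw [hns]
        have h1 := Set.ncard_add_ncard_compl ({Sum.inl v} : Set V)
        simp only [Set.ncard_singleton, Set.ncard_univ, Nat.card_eq_fintype_card, hcard] at h1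
        omega
      · by_contra hne
        have h1 : ℓ (Sum.inl v) < ℓ u := hu.2 _ (((hadj u).mpr hne).symm)
        have h2 : ℓ u < ℓ (Sum.inl v) := h u hne
        exact absurd (h1.trans h2) (lt_irrefl _)
  rw [hset, ← Nat.card_coe_set_eq]
  have hc2 : Fintype.card V = (n - 1) + 1 := by omega
  rw [hc2]
  exact card_equiv_max (Sum.inl v) (n - 1) hc2
end

section
/- Let n ≥ 3, and let W_n = C_n ∨ K̄_1 be the wheel graph on n+1 vertices with central vertex c (the K̄_1 vertex). Then |P({c}; W_n)| = n!. -/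
open SimpleGraph

/-- for the wheel graph `W_n = C_n ∨ K̄_1` on `n + 1` vertices with central
vertex `c` (the `K̄_1` vertex) and `n ≥ 3`, `|P({c}; W_n)| = n!`. -/
theorem wheel_center_peak_count (n : ℕ) (hn : 3 ≤ n) :
    (peakLabelings (graphJoin (cycleGraph n) (⊥ : SimpleGraph (Fin 1)))
        {Sum.inr 0}).ncard =
      Nat.factorial n := by
  set G := graphJoin (cycleGraph n) (⊥ : SimpleGraph (Fin 1)) with hG
  have hm : Fintype.card (Fin n ⊕ Fin 1) = n + 1 := by simp
  have hadj_l : ∀ i : Fin n, G.Adj (Sum.inr 0) (Sum.inl i) := fun i => trivial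
  have hadj_r : ∀ j : Fin 1, ¬ G.Adj (Sum.inr 0) (Sum.inr j) := by
    intro j h
    exact h.elim
  have hnbr : G.neighborSet (Sum.inr 0) = Set.range Sum.inl := by
    ext w
    cases w with
    | inl u => simp [SimpleGraph.neighborSet, hadj_l u]
    | inr u => simp [SimpleGraph.neighborSet, hadj_r u]
  have hnbr_card : (G.neighborSet (Sum.inr 0)).ncard = n := by
    rw [hnbr, ← Nat.card_coe_set_eq, Nat.card_range_of_injective Sum.inl_injective]
    simp
  set g : (Fin n ≃ Fin n) → (Fin n ⊕ Fin 1 ≃ Fin (Fintype.card (Fin n ⊕ Fin 1))) :=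
    fun f => (Equiv.sumCongr f (Equiv.refl (Fin 1))).trans
      (finSumFinEquiv.trans (finCongr hm.symm)) with hg
  have hg_inl : ∀ (f : Fin n ≃ Fin n) (i : Fin n), ((g f) (Sum.inl i) : ℕ) = (f i : ℕ) := by
    intro f i
    simp [hg]
  have hg_c : ∀ (f : Fin n ≃ Fin n), ((g f) (Sum.inr 0) : ℕ) = n := by
    intro f
    simp [hg]
  have key : peakLabelings G {Sum.inr 0} = Set.range g := by
    ext ℓ
    constructor
    · intro hℓ
      have hcmem : Sum.inr 0 ∈ peakSet G ℓ := by
        rw [show peakSet G ℓ = {Sum.inr 0} from hℓ]; rfl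
      have hlt : ∀ i : Fin n, ℓ (Sum.inl i) < ℓ (Sum.inr 0) :=
        fun i => hcmem.2 _ (hadj_l i)
      have hcbound : (ℓ (Sum.inr 0) : ℕ) < n + 1 := hm ▸ (ℓ (Sum.inr 0)).isLt
      have hval : ∀ i : Fin n, (ℓ (Sum.inl i) : ℕ) < n := by
        intro i
        have := hlt i
        rw [Fin.lt_def] at this
        omega
      have hf0inj : Function.Injective (fun i : Fin n => (⟨(ℓ (Sum.inl i) : ℕ), hval i⟩ : Fin n)) := by
        intro a b h
        have h' : (ℓ (Sum.inl a) : ℕ) = (ℓ (Sum.inl b) : ℕ) := by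
          simpa using congrArg Fin.val h
        exact Sum.inl_injective (ℓ.injective (Fin.val_injective h'))
      set f : Fin n ≃ Fin n := Equiv.ofBijective _
        ((Finite.injective_iff_bijective).mp hf0inj) with hf
      have hctop : (ℓ (Sum.inr 0) : ℕ) = n := by
        obtain ⟨v, hv⟩ := ℓ.surjective ⟨n, by omega⟩
        cases v with
        | inl i =>
          have h1 := hval i
          rw [hv] at h1
          simp at h1
        | inr j =>
          have hj : j = 0 := Subsingleton.elim _ _
          rw [hj] at hv
          rw [hv]
      refine ⟨f, ?_⟩
      apply Equiv.ext
      intro v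
      cases v with
      | inl i =>
        apply Fin.val_injective
        rw [hg_inl]
        simp [hf, Equiv.ofBijective_apply]
      | inr j =>
        have hj : j = 0 := Subsingleton.elim _ _
        subst hj
        apply Fin.val_injective
        rw [hg_c, hctop]
    · rintro ⟨f, rfl⟩
      show peakSet G (g f) = {Sum.inr 0}
      ext v
      cases v with
      | inl i =>
        simp only [Set.mem_singleton_iff]
        constructor
        · intro hpk
          exfalso
          have hlt := hpk.2 (Sum.inr 0) (hadj_l i).symm
          rw [Fin.lt_def] at hlt
          have h1 := hg_inl f i
          have h2 := hg_c f
          have hib := (f i).isLt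
          omega
        · intro h
          exact absurd h (by simp)
      | inr j =>
        have hj : j = 0 := Subsingleton.elim _ _
        subst hj
        simp only [Set.mem_singleton_iff]
        constructor
        · intro _; trivial
        · intro _
          constructor
          · rw [hnbr_card]; omega
          · intro w hw
            cases w with
            | inl i =>
              rw [Fin.lt_def]
              have h1 := hg_inl f i
              have h2 := hg_c f
              have hib := (f i).isLt
              omega
            | inr j' =>
              exact absurd hw (hadj_r j')
  rw [key, ← Nat.card_coe_set_eq]
  have hginj : Function.Injective g := by
    intro f f' h
    ext i
    have h1 := congrArg (fun e : Fin n ⊕ Fin 1 ≃ Fin (Fintype.card (Fin n ⊕ Fin 1)) =>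
      (e (Sum.inl i) : ℕ)) h
    rw [hg_inl, hg_inl] at h1
    exact h1
  rw [Nat.card_range_of_injective hginj, Nat.card_eq_fintype_card,
    Fintype.card_equiv (Equiv.refl _), Fintype.card_fin]
end
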